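/- If (S, ⊣) is a monoid with identity e and (S, ⊢) is an interassociate of (S, ⊣), then there exists a ∈ S such that x ⊢ y = x ⊣ a ⊣ y for all x, y ∈ S (namely a = e ⊢ e). -/

import Mathlib

theorem monoid_interassociate_is_variant {S : Type*} (d h : S → S → S) (e : S)
    (e_left : ∀ x, d e x = x) (e_right : ∀ x, d x e = x)
    (inter1 : ∀ x y z, h (d x y) z = d x (h y z))
    (inter2 : ∀ x y z, d (h x y) z = h x (d y z)) :
    ∃ a : S, ∀ x y, h x y = d (d x a) y := by
  refine ⟨h e e, fun x y => ?_⟩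
  calc h x y = h x (d e y) := by rw [e_left]
    _ = d (h x e) y := (inter2 x e y).symm
    _ = d (h (d x e) e) y := by rw [e_right]
    _ = d (d x (h e e)) y := by rw [inter1]
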